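/- Let X be a T×K real matrix of full column rank and Γ a T×T matrix with ‖Γ‖ ≤ 1−c for some c ∈ (0,1). With M_Γ = I − X(Xᵀ(I−Γ)X)⁻¹Xᵀ(I−Γ) and T−K_Γ := tr[(I−Γ)M_Γ], one has the two-sided bound: ((1−‖Γ‖)/(1+‖Γ‖))·(T−K) ≤ tr[(I−Γ)M_Γ] ≤ ((1+‖Γ‖)/(1−‖Γ‖))·(T−K). -/

import Mathlib

/-!
Write `G = 1 - Γ` and `γ = ‖Γ‖`. The quadratic form of `G` is coercive, `(1 - γ)‖v‖² ≤ vᵀGv`,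
and `‖Gv‖² ≤ (1 + γ) vᵀGv`. Since `M_Γ` is idempotent with `M_Γᵀ G M_Γ = G M_Γ`, the trace
`tr(G M_Γ) = tr(M_Γᵀ G M_Γ)` is at least `(1 - γ) tr(M_Γᵀ M_Γ) ≥ (1 - γ) tr M_Γ = (1 - γ)(T - K)`.
For the upper bound, Cauchy–Schwarz turns the second inequality into `vᵀ G M_Γ v ≤ (1 + γ)‖v‖²`,
and `tr(G M_Γ) = tr(M G M_Γ M)` for the orthogonal residual projection `M`, whose trace is `T - K`.
-/

open Matrix

namespace Matrix

theorem mulVec_injective_of_rank_eq_card {m n K : Type*} [Fintype n] [Field K]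
    {X : Matrix m n K} (hX : X.rank = Fintype.card n) : Function.Injective X.mulVec :=
  mulVec_injective_iff.mpr <| linearIndependent_iff_card_eq_finrank_span.mpr <| by
    rw [← hX, rank_eq_finrank_span_cols]; rfl

variable {m n R : Type*} [Fintype m] [Fintype n]

section CommSemiring

variable [CommSemiring R]

theorem dotProduct_transpose_mul_mul_mulVec (Q : Matrix m n R) (N : Matrix m m R) (v : n → R) :
    v ⬝ᵥ (Qᵀ * N * Q) *ᵥ v = Q *ᵥ v ⬝ᵥ N *ᵥ (Q *ᵥ v) := by
  rw [← mulVec_mulVec, ← mulVec_mulVec, dotProduct_mulVec, vecMul_transpose]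

theorem trace_transpose_mul_mul_eq_sum (Q : Matrix m n R) (N : Matrix m m R) :
    (Qᵀ * N * Q).trace = ∑ j, Q.col j ⬝ᵥ N *ᵥ Q.col j := by
  refine Finset.sum_congr rfl fun j _ => ?_
  simp only [diag_apply, mul_apply, transpose_apply, col_apply, dotProduct, mulVec,
    Finset.sum_mul, Finset.mul_sum]
  rw [Finset.sum_comm]
  exact Finset.sum_congr rfl fun a _ => Finset.sum_congr rfl fun b _ => by ring

theorem trace_transpose_mul_self_eq_sum (Q : Matrix m n R) :
    (Qᵀ * Q).trace = ∑ j, Q.col j ⬝ᵥ Q.col j := by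
  classical
  simpa using trace_transpose_mul_mul_eq_sum Q 1

end CommSemiring

section OrderedRing

variable [CommRing R] [PartialOrder R] [IsOrderedRing R] {Q : Matrix m n R} {N : Matrix m m R}

theorem mul_trace_transpose_mul_self_le {a : R} (h : ∀ v, a * (v ⬝ᵥ v) ≤ v ⬝ᵥ N *ᵥ v) :
    a * (Qᵀ * Q).trace ≤ (Qᵀ * N * Q).trace := by
  rw [trace_transpose_mul_self_eq_sum, trace_transpose_mul_mul_eq_sum, Finset.mul_sum]
  exact Finset.sum_le_sum fun j _ => h (Q.col j)

theorem trace_transpose_mul_mul_le {b : R} (h : ∀ v, v ⬝ᵥ N *ᵥ v ≤ b * (v ⬝ᵥ v)) :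
    (Qᵀ * N * Q).trace ≤ b * (Qᵀ * Q).trace := by
  rw [trace_transpose_mul_self_eq_sum, trace_transpose_mul_mul_eq_sum, Finset.mul_sum]
  exact Finset.sum_le_sum fun j _ => h (Q.col j)

end OrderedRing

theorem trace_le_trace_transpose_mul_self {P : Matrix m m ℝ} (hP : P * P = P) :
    P.trace ≤ (Pᵀ * P).trace := by
  have hskew := (posSemidef_conjTranspose_mul_self (P - Pᵀ)).trace_nonneg
  have hsq : (Pᵀ * Pᵀ).trace = P.trace := by rw [← transpose_mul, trace_transpose, hP]
  rw [conjTranspose_eq_transpose_of_trivial, transpose_sub, transpose_transpose, Matrix.sub_mul,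
    Matrix.mul_sub, Matrix.mul_sub, trace_sub, trace_sub, trace_sub, hP, hsq,
    trace_mul_comm P Pᵀ] at hskew
  linarith

section Oblique

variable [DecidableEq m] [DecidableEq n] [CommRing R]

/-- The paper's `M_Γ` is `obliqueResidual X (1 - Γ)`; `obliqueResidual X 1` is the orthogonal
residual projection `M`. -/
noncomputable def obliqueResidual (X : Matrix m n R) (G : Matrix m m R) : Matrix m m R :=
  1 - X * (Xᵀ * G * X)⁻¹ * (Xᵀ * G)

variable {X : Matrix m n R} {G : Matrix m m R}

theorem mul_obliqueResidual_of_mul_eq_zero {l : Type*} {B : Matrix l m R} (hB : B * X = 0) :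
    B * obliqueResidual X G = B := by
  simp only [obliqueResidual, Matrix.mul_sub, Matrix.mul_one, ← Matrix.mul_assoc, hB,
    Matrix.zero_mul, sub_zero]

theorem obliqueResidual_mul (hA : IsUnit (Xᵀ * G * X)) : obliqueResidual X G * X = 0 := by
  have hinv := nonsing_inv_mul _ ((isUnit_iff_isUnit_det _).mp hA)
  simp only [obliqueResidual, Matrix.sub_mul, Matrix.one_mul, Matrix.mul_assoc] at hinv ⊢
  rw [hinv, Matrix.mul_one, sub_self]

theorem transpose_mul_mul_obliqueResidual (hA : IsUnit (Xᵀ * G * X)) :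
    Xᵀ * G * obliqueResidual X G = 0 := by
  have hinv := mul_nonsing_inv _ ((isUnit_iff_isUnit_det _).mp hA)
  simp only [obliqueResidual, Matrix.mul_sub, Matrix.mul_one, ← Matrix.mul_assoc] at hinv ⊢
  rw [hinv, Matrix.one_mul, sub_self]

theorem obliqueResidual_mul_self (hA : IsUnit (Xᵀ * G * X)) :
    obliqueResidual X G * obliqueResidual X G = obliqueResidual X G := by
  calc obliqueResidual X G * obliqueResidual X G
      = obliqueResidual X G - X * (Xᵀ * G * X)⁻¹ * (Xᵀ * G * obliqueResidual X G) := by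
        nth_rewrite 1 [obliqueResidual]
        simp only [Matrix.sub_mul, Matrix.one_mul, Matrix.mul_assoc]
    _ = obliqueResidual X G := by
        rw [transpose_mul_mul_obliqueResidual hA, Matrix.mul_zero, sub_zero]

theorem transpose_obliqueResidual_mul (hA : IsUnit (Xᵀ * G * X)) :
    (obliqueResidual X G)ᵀ * (G * obliqueResidual X G) = G * obliqueResidual X G := by
  calc (obliqueResidual X G)ᵀ * (G * obliqueResidual X G)
      = G * obliqueResidual X G
          - Gᵀ * X * (Xᵀ * G * X)⁻¹ᵀ * (Xᵀ * G * obliqueResidual X G) := by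
        nth_rewrite 1 [obliqueResidual]
        simp only [transpose_sub, transpose_one, transpose_mul, transpose_transpose, Matrix.sub_mul,
          Matrix.one_mul, Matrix.mul_assoc]
    _ = G * obliqueResidual X G := by
        rw [transpose_mul_mul_obliqueResidual hA, Matrix.mul_zero, sub_zero]

theorem trace_obliqueResidual (hA : IsUnit (Xᵀ * G * X)) :
    (obliqueResidual X G).trace = Fintype.card m - Fintype.card n := by
  rw [obliqueResidual, trace_sub, Matrix.mul_assoc, trace_mul_comm, Matrix.mul_assoc,
    nonsing_inv_mul _ ((isUnit_iff_isUnit_det _).mp hA), trace_one, trace_one]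

end Oblique

section Real

theorem dotProduct_self_eq_norm_sq (v : m → ℝ) :
    v ⬝ᵥ v = ‖(WithLp.toLp 2 v : EuclideanSpace ℝ m)‖ ^ 2 := by
  rw [← real_inner_self_eq_norm_sq, EuclideanSpace.inner_toLp_toLp, star_trivial]

theorem sq_dotProduct_le (v w : m → ℝ) : (v ⬝ᵥ w) ^ 2 ≤ (v ⬝ᵥ v) * (w ⬝ᵥ w) := by
  have h := real_inner_mul_inner_self_le (WithLp.toLp 2 v : EuclideanSpace ℝ m) (WithLp.toLp 2 w)
  simp only [EuclideanSpace.inner_toLp_toLp, star_trivial] at h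
  rwa [dotProduct_comm w v, ← sq] at h

theorem dotProduct_mulVec_le_of_forall_mulVec_dotProduct_le {N : Matrix m m ℝ} {b : ℝ}
    (hb : 0 ≤ b) (h : ∀ v, N *ᵥ v ⬝ᵥ N *ᵥ v ≤ b * (v ⬝ᵥ N *ᵥ v)) (v : m → ℝ) :
    v ⬝ᵥ N *ᵥ v ≤ b * (v ⬝ᵥ v) := by
  have hcs := sq_dotProduct_le v (N *ᵥ v)
  have hv : 0 ≤ v ⬝ᵥ v := by rw [dotProduct_self_eq_norm_sq]; positivity
  have hNv := mul_le_mul_of_nonneg_left (h v) hv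
  by_contra! hlt
  have hpos : 0 < v ⬝ᵥ N *ᵥ v := (mul_nonneg hb hv).trans_lt hlt
  nlinarith [mul_lt_mul_of_pos_right hlt hpos]

variable [DecidableEq m]

theorem abs_dotProduct_mulVec_le (Γ : Matrix m m ℝ) (v : m → ℝ) :
    |v ⬝ᵥ Γ *ᵥ v| ≤ ‖toEuclideanCLM (𝕜 := ℝ) Γ‖ * (v ⬝ᵥ v) := by
  set x : EuclideanSpace ℝ m := WithLp.toLp 2 v
  calc |v ⬝ᵥ Γ *ᵥ v| = |inner ℝ x (toEuclideanCLM (𝕜 := ℝ) Γ x)| := by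
        rw [inner_toEuclideanCLM]
    _ ≤ ‖x‖ * (‖toEuclideanCLM (𝕜 := ℝ) Γ‖ * ‖x‖) :=
        (abs_real_inner_le_norm _ _).trans <| by
          gcongr; exact (toEuclideanCLM (𝕜 := ℝ) Γ).le_opNorm x
    _ = ‖toEuclideanCLM (𝕜 := ℝ) Γ‖ * (v ⬝ᵥ v) := by rw [dotProduct_self_eq_norm_sq]; ring

theorem mulVec_dotProduct_mulVec_le (Γ : Matrix m m ℝ) (v : m → ℝ) :
    Γ *ᵥ v ⬝ᵥ Γ *ᵥ v ≤ ‖toEuclideanCLM (𝕜 := ℝ) Γ‖ ^ 2 * (v ⬝ᵥ v) := by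
  rw [dotProduct_self_eq_norm_sq, dotProduct_self_eq_norm_sq, ← mul_pow]
  gcongr
  exact (toEuclideanCLM (𝕜 := ℝ) Γ).le_opNorm (WithLp.toLp 2 v)

theorem mul_dotProduct_self_le_one_sub (Γ : Matrix m m ℝ) (v : m → ℝ) :
    (1 - ‖toEuclideanCLM (𝕜 := ℝ) Γ‖) * (v ⬝ᵥ v) ≤ v ⬝ᵥ (1 - Γ) *ᵥ v := by
  rw [sub_mulVec, one_mulVec, dotProduct_sub]
  linarith [le_abs_self (v ⬝ᵥ Γ *ᵥ v), abs_dotProduct_mulVec_le Γ v]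

theorem one_sub_mulVec_dotProduct_le {Γ : Matrix m m ℝ} (hΓ : ‖toEuclideanCLM (𝕜 := ℝ) Γ‖ ≤ 1)
    (v : m → ℝ) :
    (1 - Γ) *ᵥ v ⬝ᵥ (1 - Γ) *ᵥ v ≤ (1 + ‖toEuclideanCLM (𝕜 := ℝ) Γ‖) * (v ⬝ᵥ (1 - Γ) *ᵥ v) := by
  have hγ := norm_nonneg (toEuclideanCLM (𝕜 := ℝ) Γ)
  have hΓv := abs_le.mp (abs_dotProduct_mulVec_le Γ v)
  have hv : 0 ≤ v ⬝ᵥ v := by rw [dotProduct_self_eq_norm_sq]; positivity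
  rw [sub_mulVec, one_mulVec, dotProduct_sub, sub_dotProduct, sub_dotProduct, dotProduct_sub,
    dotProduct_comm (Γ *ᵥ v) v]
  nlinarith [mulVec_dotProduct_mulVec_le Γ v, mul_le_mul_of_nonneg_left hΓv.1 (sub_nonneg.mpr hΓ)]

end Real

section ObliqueBounds

variable [DecidableEq n] {X : Matrix m n ℝ} {G : Matrix m m ℝ}

theorem isUnit_transpose_mul_mul_of_coercive (hX : Function.Injective X.mulVec) {a : ℝ}
    (ha : 0 < a) (hG : ∀ v, a * (v ⬝ᵥ v) ≤ v ⬝ᵥ G *ᵥ v) : IsUnit (Xᵀ * G * X) := by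
  refine mulVec_injective_iff_isUnit.mp <|
    (injective_iff_map_eq_zero (Xᵀ * G * X).mulVecLin).mpr fun v hv => hX ?_
  have hquad := hG (X *ᵥ v)
  rw [← dotProduct_transpose_mul_mul_mulVec, show (Xᵀ * G * X) *ᵥ v = 0 from hv,
    dotProduct_zero] at hquad
  have hXv : X *ᵥ v ⬝ᵥ X *ᵥ v = 0 :=
    le_antisymm (nonpos_of_mul_nonpos_right hquad ha)
      (by rw [dotProduct_self_eq_norm_sq]; positivity)
  rw [dotProduct_self_eq_zero.mp hXv, mulVec_zero]

variable [DecidableEq m]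

theorem mul_sub_card_le_trace_mul_obliqueResidual (hX : Function.Injective X.mulVec) {a : ℝ}
    (ha : 0 < a) (hG : ∀ v, a * (v ⬝ᵥ v) ≤ v ⬝ᵥ G *ᵥ v) :
    a * (Fintype.card m - Fintype.card n) ≤ (G * obliqueResidual X G).trace := by
  have hA := isUnit_transpose_mul_mul_of_coercive hX ha hG
  set M := obliqueResidual X G
  calc a * (Fintype.card m - Fintype.card n) = a * M.trace := by rw [trace_obliqueResidual hA]
    _ ≤ a * (Mᵀ * M).trace := by
        gcongr; exact trace_le_trace_transpose_mul_self (obliqueResidual_mul_self hA)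
    _ ≤ (Mᵀ * G * M).trace := mul_trace_transpose_mul_self_le hG
    _ = (G * M).trace := by rw [Matrix.mul_assoc, transpose_obliqueResidual_mul hA]

theorem trace_mul_obliqueResidual_le (hX : Function.Injective X.mulVec) {a b : ℝ} (ha : 0 < a)
    (hb : 0 ≤ b) (hG : ∀ v, a * (v ⬝ᵥ v) ≤ v ⬝ᵥ G *ᵥ v)
    (hGb : ∀ v, G *ᵥ v ⬝ᵥ G *ᵥ v ≤ b * (v ⬝ᵥ G *ᵥ v)) :
    (G * obliqueResidual X G).trace ≤ b * (Fintype.card m - Fintype.card n) := by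
  have hA := isUnit_transpose_mul_mul_of_coercive hX ha hG
  have hA₁ : IsUnit (Xᵀ * (1 : Matrix m m ℝ) * X) :=
    isUnit_transpose_mul_mul_of_coercive hX one_pos (by simp)
  set M := obliqueResidual X G
  set Q := obliqueResidual X 1
  have hQQ : Qᵀ * Q = Q := by simpa using transpose_obliqueResidual_mul hA₁
  have hQ : Qᵀ = Q := calc
    Qᵀ = (Qᵀ * Q)ᵀ := by rw [hQQ]
    _ = Qᵀ * Q := by rw [transpose_mul, transpose_transpose]
    _ = Q := hQQ
  have hMQ : G * M * Q = G * M :=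
    mul_obliqueResidual_of_mul_eq_zero (by rw [Matrix.mul_assoc, obliqueResidual_mul hA,
      Matrix.mul_zero])
  have hGM : ∀ v, v ⬝ᵥ (G * M) *ᵥ v ≤ b * (v ⬝ᵥ v) :=
    dotProduct_mulVec_le_of_forall_mulVec_dotProduct_le hb fun v => by
      have h := hGb (M *ᵥ v)
      rwa [← dotProduct_transpose_mul_mul_mulVec, mulVec_mulVec, Matrix.mul_assoc,
        transpose_obliqueResidual_mul hA] at h
  calc (G * M).trace = (Qᵀ * (G * M) * Q).trace := by
        rw [hQ, Matrix.mul_assoc Q, hMQ, trace_mul_comm Q, hMQ]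
    _ ≤ b * (Qᵀ * Q).trace := trace_transpose_mul_mul_le hGM
    _ = b * (Fintype.card m - Fintype.card n) := by rw [hQQ, trace_obliqueResidual hA₁]

end ObliqueBounds

end Matrix

theorem trace_oblique_residual_bounds_general {T K : ℕ}
    (X : Matrix (Fin T) (Fin K) ℝ) (Γ : Matrix (Fin T) (Fin T) ℝ)
    (hX : X.rank = K) (hKT : K < T)
    (c : ℝ) (hc0 : 0 < c)
    (hΓ : ‖toEuclideanCLM (𝕜 := ℝ) Γ‖ ≤ 1 - c)
    (MΓ : Matrix (Fin T) (Fin T) ℝ)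
    (hMΓ : MΓ = 1 - X * (Xᵀ * (1 - Γ) * X)⁻¹ * (Xᵀ * (1 - Γ))) :
    (1 - ‖toEuclideanCLM (𝕜 := ℝ) Γ‖) / (1 + ‖toEuclideanCLM (𝕜 := ℝ) Γ‖) * ((T : ℝ) - K)
        ≤ ((1 - Γ) * MΓ).trace ∧
      ((1 - Γ) * MΓ).trace
        ≤ (1 + ‖toEuclideanCLM (𝕜 := ℝ) Γ‖) / (1 - ‖toEuclideanCLM (𝕜 := ℝ) Γ‖) * ((T : ℝ) - K) := by
  set γ := ‖toEuclideanCLM (𝕜 := ℝ) Γ‖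
  have hγ0 : 0 ≤ γ := norm_nonneg _
  have hγ1 : 0 < 1 - γ := by linarith
  have hTK : (0 : ℝ) ≤ T - K := sub_nonneg.mpr (by exact_mod_cast hKT.le)
  have hXinj := mulVec_injective_of_rank_eq_card (X := X) (by rw [hX, Fintype.card_fin])
  have hlow := mul_sub_card_le_trace_mul_obliqueResidual hXinj hγ1
    (mul_dotProduct_self_le_one_sub Γ)
  have hup := trace_mul_obliqueResidual_le hXinj hγ1 (by positivity)
    (mul_dotProduct_self_le_one_sub Γ) (one_sub_mulVec_dotProduct_le (by linarith))
  simp only [Fintype.card_fin] at hlow hup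
  subst hMΓ
  constructor
  · calc (1 - γ) / (1 + γ) * ((T : ℝ) - K) ≤ (1 - γ) * (T - K) := by
          gcongr; exact div_le_self hγ1.le (by linarith)
      _ ≤ _ := hlow
  · calc _ ≤ (1 + γ) * ((T : ℝ) - K) := hup
      _ ≤ (1 + γ) / (1 - γ) * (T - K) := by
          gcongr; exact le_div_self (by positivity) hγ1 (by linarith)

/-- With `‖Γ‖ ≤ 1−c` for some `c ∈ (0,1)`, `K < T`, and
`M_Γ = I − X(Xᵀ(I−Γ)X)⁻¹Xᵀ(I−Γ)`, the trace `tr[(I−Γ)M_Γ]` satisfies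
`((1−‖Γ‖)/(1+‖Γ‖))(T−K) ≤ tr[(I−Γ)M_Γ] ≤ ((1+‖Γ‖)/(1−‖Γ‖))(T−K)`. -/
theorem trace_oblique_residual_bounds {T K : ℕ}
    (X : Matrix (Fin T) (Fin K) ℝ) (Γ : Matrix (Fin T) (Fin T) ℝ)
    (hX : X.rank = K) (hKT : K < T)
    (c : ℝ) (hc0 : 0 < c) (hc1 : c < 1)
    (hΓ : ‖toEuclideanCLM (𝕜 := ℝ) Γ‖ ≤ 1 - c)
    (MΓ : Matrix (Fin T) (Fin T) ℝ)
    (hMΓ : MΓ = 1 - X * (Xᵀ * (1 - Γ) * X)⁻¹ * (Xᵀ * (1 - Γ))) :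
    (1 - ‖toEuclideanCLM (𝕜 := ℝ) Γ‖) / (1 + ‖toEuclideanCLM (𝕜 := ℝ) Γ‖) * ((T : ℝ) - K)
        ≤ ((1 - Γ) * MΓ).trace ∧
      ((1 - Γ) * MΓ).trace
        ≤ (1 + ‖toEuclideanCLM (𝕜 := ℝ) Γ‖) / (1 - ‖toEuclideanCLM (𝕜 := ℝ) Γ‖) * ((T : ℝ) - K) :=
  trace_oblique_residual_bounds_general X Γ hX hKT c hc0 hΓ MΓ hMΓ
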